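/- Kawasaki reflection form for a single vertex: if α₁ − α₂ + α₃ − ⋯ − α_{2n} = 0 and the crease lines l₁,…,l_{2n} through the origin make angles θᵢ = α₁ + ⋯ + α_{i-1} with l₁ (θ₁ = 0), then the composition of reflections R(l₁)∘R(l₂)∘⋯∘R(l_{2n}) is the identity on ℝ², where R(l) is reflection across the line l through the origin at the given angle. -/

import Mathlib

open Real

/-!
Reflections across lines at angles `a` and `b` compose to the rotation by `2 (a - b)`, so pairing
consecutive creases turns the product into the rotation by `-2 (α₀ + α₂ + ⋯ + α_{2n-2})`.
Adding the total-angle condition to the Kawasaki condition shows this even-indexed sum is `π`,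
hence the product is the rotation by `-2π`, the identity.
-/

theorem List.prod_range_two_mul {M : Type*} [Monoid M] (f : ℕ → M) (m : ℕ) :
    ((List.range (2 * m)).map f).prod
      = ((List.range m).map fun k => f (2 * k) * f (2 * k + 1)).prod := by
  induction m with
  | zero => simp
  | succ m ih =>
    rw [show 2 * (m + 1) = 2 * m + 1 + 1 by ring, List.prod_range_succ, List.prod_range_succ,
      List.prod_range_succ, ih, mul_assoc]

theorem Finset.sum_range_two_mul {M : Type*} [AddCommMonoid M] (f : ℕ → M) (m : ℕ) :
    ∑ i ∈ Finset.range (2 * m), f i = ∑ k ∈ Finset.range m, (f (2 * k) + f (2 * k + 1)) := by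
  induction m with
  | zero => simp
  | succ m ih =>
    rw [show 2 * (m + 1) = 2 * m + 1 + 1 by ring, Finset.sum_range_succ, Finset.sum_range_succ,
      Finset.sum_range_succ, ih, add_assoc]

theorem two_mul_sum_range_even (α : ℕ → ℝ) (m : ℕ) :
    2 * ∑ k ∈ Finset.range m, α (2 * k)
      = ∑ i ∈ Finset.range (2 * m), α i + ∑ i ∈ Finset.range (2 * m), (-1 : ℝ) ^ i * α i := by
  rw [Finset.sum_range_two_mul, Finset.sum_range_two_mul, ← Finset.sum_add_distrib,
    Finset.mul_sum]
  refine Finset.sum_congr rfl fun k _ => ?_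
  simp only [pow_succ, pow_mul]
  ring

noncomputable def rotationMatrix (x : ℝ) : Matrix (Fin 2) (Fin 2) ℝ :=
  !![cos x, -sin x; sin x, cos x]

noncomputable def reflectionMatrix (t : ℝ) : Matrix (Fin 2) (Fin 2) ℝ :=
  !![cos (2 * t), sin (2 * t); sin (2 * t), -cos (2 * t)]

theorem rotationMatrix_zero : rotationMatrix 0 = 1 := by
  ext i j
  fin_cases i <;> fin_cases j <;> simp [rotationMatrix]

theorem rotationMatrix_neg_two_pi : rotationMatrix (-(2 * π)) = 1 := by
  ext i j
  fin_cases i <;> fin_cases j <;> simp [rotationMatrix]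

theorem rotationMatrix_add (x y : ℝ) :
    rotationMatrix (x + y) = rotationMatrix x * rotationMatrix y := by
  ext i j
  fin_cases i <;> fin_cases j <;>
    simp [rotationMatrix, Matrix.mul_apply, Fin.sum_univ_two, cos_add, sin_add] <;> ring

theorem reflectionMatrix_mul_reflectionMatrix (a b : ℝ) :
    reflectionMatrix a * reflectionMatrix b = rotationMatrix (2 * (a - b)) := by
  ext i j
  fin_cases i <;> fin_cases j <;>
    simp [reflectionMatrix, rotationMatrix, Matrix.mul_apply, Fin.sum_univ_two, mul_sub,
      cos_sub, sin_sub] <;> ring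

theorem list_prod_reflectionMatrix (θ : ℕ → ℝ) (m : ℕ) :
    ((List.range (2 * m)).map fun i => reflectionMatrix (θ i)).prod
      = rotationMatrix (2 * ∑ k ∈ Finset.range m, (θ (2 * k) - θ (2 * k + 1))) := by
  rw [List.prod_range_two_mul]
  induction m with
  | zero => simp [rotationMatrix_zero]
  | succ m ih =>
    rw [List.prod_range_succ, ih, Finset.sum_range_succ, mul_add, rotationMatrix_add,
      reflectionMatrix_mul_reflectionMatrix]

theorem kawasaki_reflection_general (n : ℕ) (α : ℕ → ℝ)
    (htot : ∑ i ∈ Finset.range (2 * n), α i = 2 * π)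
    (hkaw : ∑ i ∈ Finset.range (2 * n), (-1 : ℝ) ^ i * α i = 0)
    (θ : ℕ → ℝ) (hθ : ∀ i, θ i = ∑ k ∈ Finset.range i, α k)
    (R : ℝ → Matrix (Fin 2) (Fin 2) ℝ)
    (hR : ∀ t, R t = !![Real.cos (2 * t), Real.sin (2 * t);
                        Real.sin (2 * t), -Real.cos (2 * t)]) :
    ((List.range (2 * n)).map (fun i => R (θ i))).prod = 1 := by
  obtain rfl : R = reflectionMatrix := funext hR
  have hstep : ∀ k, θ (2 * k) - θ (2 * k + 1) = -α (2 * k) := fun k => by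
    rw [hθ, hθ, Finset.sum_range_succ]; ring
  have heven : ∑ k ∈ Finset.range n, α (2 * k) = π := by
    linarith [two_mul_sum_range_even α n]
  rw [list_prod_reflectionMatrix, ← rotationMatrix_neg_two_pi]
  simp only [hstep, Finset.sum_neg_distrib, heven, mul_neg]

/-- Kawasaki's theorem in reflection form (sufficiency direction): if the
consecutive angles `α 0, …, α (2n-1)` of a single vertex (summing to the full
angle `2π`) satisfy the alternating-sum condition, and `θ i` is the angle of
crease line `lᵢ₊₁` (so `θ 0 = 0`, `θ i = α 0 + ⋯ + α (i-1)`), then the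
composition of the reflections across the crease lines, in order, is the
identity. -/
theorem kawasaki_reflection (n : ℕ) (hn : 1 ≤ n) (α : ℕ → ℝ)
    (hα : ∀ i < 2 * n, 0 < α i)
    (htot : ∑ i ∈ Finset.range (2 * n), α i = 2 * π)
    (hkaw : ∑ i ∈ Finset.range (2 * n), (-1 : ℝ) ^ i * α i = 0)
    (θ : ℕ → ℝ) (hθ : ∀ i, θ i = ∑ k ∈ Finset.range i, α k)
    (R : ℝ → Matrix (Fin 2) (Fin 2) ℝ)
    (hR : ∀ t, R t = !![Real.cos (2 * t), Real.sin (2 * t);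
                        Real.sin (2 * t), -Real.cos (2 * t)]) :
    ((List.range (2 * n)).map (fun i => R (θ i))).prod = 1 :=
  kawasaki_reflection_general n α htot hkaw θ hθ R hR
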